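/- For t < 0 and any z with |z| ≤ 1, the one-step two-point average of g satisfies the identity-based bound: |(1+δ)/2 · g(s+1-δ, t+1) + (1-δ)/2 · g(s-1-δ, t+1) - g(s,t) + (δ²/2) g''(s, t+1)| ≤ C(|t+1|^{-3/2} + |t+1|^{-2}) for all s ∈ ℝ, t ≤ -2, δ ∈ [0,1], where g(s,t) = (1/√π)∫_{s/√(-2t)}^∞ e^{-x²}dx and C is an absolute constant. -/

import Mathlib

/-!
Write `g s t = G (s / √(-2t))` with `G` the normalised Gaussian tail. Then `g` solves the backward
heat equation `∂ₜg = -½ ∂ₛ²g`, and by self-similarity `|∂ₛ³g| ≲ |t|^{-3/2}`, `|∂ₜ²g| ≲ |t|^{-2}`.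
Expand `g (s ± 1 - δ) (t + 1)` to second order in space around `s`, and `g s t` to first order in
time around `t + 1`. The displacements `±1 - δ` have mean zero under the weights `(1 ± δ)/2` and
mean square `1 - δ²`, so the averaged first-order terms cancel, and the heat equation turns the
time step into `-½ ∂ₛ²g`; what remains of the second-order terms is `-δ²/2 ∂ₛ²g`, which the last
term cancels. The Taylor remainders are controlled by the two derivative bounds.
-/

open Real MeasureTheory

noncomputable def g (s t : ℝ) : ℝ :=
  (1 / Real.sqrt π) * ∫ x in Set.Ioi (s / Real.sqrt (-2 * t)), Real.exp (-x ^ 2)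

open Set

theorem abs_taylor_one_le_of_hasDerivAt {f f' f'' : ℝ → ℝ} {a b M : ℝ}
    (hf : ∀ x ∈ uIcc a b, HasDerivAt f (f' x) x)
    (hf' : ∀ x ∈ uIcc a b, HasDerivAt f' (f'' x) x)
    (hM : ∀ x ∈ uIcc a b, |f'' x| ≤ M) :
    |f b - f a - (b - a) * f' a| ≤ M * (b - a) ^ 2 := by
  have hderiv_lip : ∀ x ∈ uIcc a b, |f' x - f' a| ≤ M * |b - a| := fun x hx =>
    calc |f' x - f' a| ≤ M * |x - a| :=
          (convex_uIcc a b).norm_image_sub_le_of_norm_hasDerivWithin_le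
            (fun y hy => (hf' y hy).hasDerivWithinAt) hM left_mem_uIcc hx
      _ ≤ M * |b - a| :=
          mul_le_mul_of_nonneg_left (abs_sub_left_of_mem_uIcc hx)
            ((abs_nonneg _).trans (hM a left_mem_uIcc))
  have hremainder : ∀ x ∈ uIcc a b,
      HasDerivAt (fun y => f y - f a - (y - a) * f' a) (f' x - f' a) x := fun x hx =>
    ((hf x hx).sub_const (f a)).sub
      ((((hasDerivAt_id' x).sub_const a).mul_const (f' a)).congr_deriv (one_mul _))
  have := (convex_uIcc a b).norm_image_sub_le_of_norm_hasDerivWithin_le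
    (fun y hy => (hremainder y hy).hasDerivWithinAt) hderiv_lip left_mem_uIcc right_mem_uIcc
  simpa [mul_assoc, ← sq] using this

theorem abs_taylor_two_le_of_hasDerivAt {f f' f'' f''' : ℝ → ℝ} {a b M : ℝ}
    (hf : ∀ x ∈ uIcc a b, HasDerivAt f (f' x) x)
    (hf' : ∀ x ∈ uIcc a b, HasDerivAt f' (f'' x) x)
    (hf'' : ∀ x ∈ uIcc a b, HasDerivAt f'' (f''' x) x)
    (hM : ∀ x ∈ uIcc a b, |f''' x| ≤ M) :
    |f b - f a - (b - a) * f' a - (b - a) ^ 2 / 2 * f'' a| ≤ M * |b - a| ^ 3 := by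
  have hM0 : 0 ≤ M := (abs_nonneg _).trans (hM a left_mem_uIcc)
  have hderiv_bound : ∀ x ∈ uIcc a b, |f' x - f' a - (x - a) * f'' a| ≤ M * |b - a| ^ 2 :=
    fun x hx => by
      have hsub := uIcc_subset_uIcc_left hx
      calc |f' x - f' a - (x - a) * f'' a| ≤ M * (x - a) ^ 2 :=
            abs_taylor_one_le_of_hasDerivAt (fun y hy => hf' y (hsub hy))
              (fun y hy => hf'' y (hsub hy)) (fun y hy => hM y (hsub hy))
        _ ≤ M * |b - a| ^ 2 := by
            rw [← sq_abs (x - a)]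
            exact mul_le_mul_of_nonneg_left
              (pow_le_pow_left₀ (abs_nonneg _) (abs_sub_left_of_mem_uIcc hx) 2) hM0
  have hremainder : ∀ x ∈ uIcc a b,
      HasDerivAt (fun y => f y - f a - (y - a) * f' a - (y - a) ^ 2 / 2 * f'' a)
        (f' x - f' a - (x - a) * f'' a) x := fun x hx => by
    have hlin := ((hasDerivAt_id' x).sub_const a).mul_const (f' a)
    have hquad := ((((hasDerivAt_id' x).sub_const a).fun_pow 2).div_const 2).mul_const (f'' a)
    exact ((((hf x hx).sub_const (f a)).sub hlin).sub hquad).congr_deriv (by ring)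
  have := (convex_uIcc a b).norm_image_sub_le_of_norm_hasDerivWithin_le
    (fun y hy => (hremainder y hy).hasDerivWithinAt) hderiv_bound left_mem_uIcc right_mem_uIcc
  simp only [sub_self, zero_mul, sub_zero, Real.norm_eq_abs, ne_eq, OfNat.ofNat_ne_zero,
    not_false_eq_true, zero_pow, zero_div] at this
  rwa [mul_assoc, ← pow_succ] at this

noncomputable def gaussTail (u : ℝ) : ℝ := ∫ x in Ioi u, exp (-x ^ 2)

theorem integrable_exp_neg_sq : Integrable fun x : ℝ => exp (-x ^ 2) := by
  simpa using integrable_exp_neg_mul_sq (b := 1) one_pos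

theorem hasDerivAt_gaussTail (u : ℝ) : HasDerivAt gaussTail (-exp (-u ^ 2)) u := by
  have hsplit : gaussTail = fun v => gaussTail 0 - ∫ x in (0 : ℝ)..v, exp (-x ^ 2) := by
    funext v
    rw [← intervalIntegral.integral_Ioi_sub_Ioi' integrable_exp_neg_sq.integrableOn
      integrable_exp_neg_sq.integrableOn]
    simp [gaussTail]
  rw [hsplit]
  refine (intervalIntegral.integral_hasDerivAt_right integrable_exp_neg_sq.intervalIntegrable
    integrable_exp_neg_sq.aestronglyMeasurable.stronglyMeasurableAtFilter ?_).const_sub _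
  fun_prop

noncomputable def heatScale (t : ℝ) : ℝ := (√(-2 * t))⁻¹

theorem heatScale_nonneg (t : ℝ) : 0 ≤ heatScale t := inv_nonneg.2 (sqrt_nonneg _)

theorem heatScale_le_heatScale {τ t : ℝ} (hτ : τ ≤ t) (ht : t < 0) :
    heatScale τ ≤ heatScale t :=
  inv_anti₀ (sqrt_pos.2 (by linarith)) (sqrt_le_sqrt (by linarith))

theorem hasDerivAt_heatScale {t : ℝ} (ht : t < 0) : HasDerivAt heatScale (heatScale t ^ 3) t := by
  have hlin : HasDerivAt (fun τ => -2 * τ) (-2) t := by simpa using (hasDerivAt_id' t).const_mul (-2)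
  have hsqrt := (hasDerivAt_sqrt (by linarith : -2 * t ≠ 0)).comp t hlin
  refine (hsqrt.inv (sqrt_pos.2 (by linarith)).ne').congr_deriv ?_
  simp only [heatScale, Function.comp_apply]
  field_simp

theorem heatScale_pow_le_rpow {t : ℝ} (ht : t < 0) (n : ℕ) :
    heatScale t ^ n ≤ |t| ^ (-(n : ℝ) / 2) := by
  have hscale : heatScale t ^ n = (-2 * t) ^ (-(n : ℝ) / 2) := by
    rw [heatScale, sqrt_eq_rpow, ← rpow_neg (by linarith), ← rpow_natCast, ← rpow_mul (by linarith)]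
    ring_nf
  rw [hscale, abs_of_neg ht]
  exact rpow_le_rpow_of_nonpos (by linarith) (by linarith) (by
    have := n.cast_nonneg (α := ℝ); linarith)

theorem g_eq_gaussTail (s t : ℝ) : g s t = 1 / √π * gaussTail (s * heatScale t) := by
  simp only [g, gaussTail, heatScale, div_eq_mul_inv]

noncomputable def g_s (s t : ℝ) : ℝ :=
  -(1 / √π) * heatScale t * exp (-(s * heatScale t) ^ 2)

noncomputable def g_ss (s t : ℝ) : ℝ :=
  2 / √π * heatScale t ^ 2 * (s * heatScale t) * exp (-(s * heatScale t) ^ 2)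

noncomputable def g_sss (s t : ℝ) : ℝ :=
  1 / √π * heatScale t ^ 3 * (2 - 4 * (s * heatScale t) ^ 2) * exp (-(s * heatScale t) ^ 2)

noncomputable def g_sst (s t : ℝ) : ℝ :=
  2 / √π * heatScale t ^ 4 * (3 * (s * heatScale t) - 2 * (s * heatScale t) ^ 3) *
    exp (-(s * heatScale t) ^ 2)

theorem HasDerivAt.exp_neg_sq {f : ℝ → ℝ} {f' x : ℝ} (hf : HasDerivAt f f' x) :
    HasDerivAt (fun y => Real.exp (-f y ^ 2)) (-2 * f x * f' * Real.exp (-f x ^ 2)) x :=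
  (hf.fun_pow 2).fun_neg.exp.congr_deriv (by ring)

theorem hasDerivAt_g (s t : ℝ) : HasDerivAt (g · t) (g_s s t) s := by
  have hu := (hasDerivAt_id' s).mul_const (heatScale t)
  rw [show (g · t) = _ from funext fun s => g_eq_gaussTail s t]
  exact (((hasDerivAt_gaussTail _).comp s hu).const_mul _).congr_deriv (by rw [g_s]; ring)

theorem hasDerivAt_g_s (s t : ℝ) : HasDerivAt (g_s · t) (g_ss s t) s := by
  have hu := (hasDerivAt_id' s).mul_const (heatScale t)
  exact (hu.exp_neg_sq.const_mul (-(1 / √π) * heatScale t)).congr_deriv (by rw [g_ss]; ring)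

theorem hasDerivAt_g_ss (s t : ℝ) : HasDerivAt (g_ss · t) (g_sss s t) s := by
  have hu := (hasDerivAt_id' s).mul_const (heatScale t)
  exact ((hu.const_mul (2 / √π * heatScale t ^ 2)).mul hu.exp_neg_sq).congr_deriv
    (by rw [g_sss]; ring)

theorem hasDerivAt_g_time {t : ℝ} (ht : t < 0) (s : ℝ) :
    HasDerivAt (g s ·) (-(1 / 2) * g_ss s t) t := by
  have hu := (hasDerivAt_heatScale ht).const_mul s
  rw [show (g s ·) = _ from funext fun t => g_eq_gaussTail s t]
  exact (((hasDerivAt_gaussTail _).comp t hu).const_mul _).congr_deriv (by rw [g_ss]; ring)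

theorem hasDerivAt_g_ss_time {t : ℝ} (ht : t < 0) (s : ℝ) :
    HasDerivAt (g_ss s ·) (g_sst s t) t := by
  have hw := hasDerivAt_heatScale ht
  have hu := hw.const_mul s
  have := (((hw.fun_pow 3).const_mul (2 / √π * s)).mul hu.exp_neg_sq)
  rw [show (g_ss s ·) = fun τ => 2 / √π * s * heatScale τ ^ 3 * exp (-(s * heatScale τ) ^ 2) from
    funext fun τ => by rw [g_ss]; ring]
  exact this.congr_deriv (by rw [g_sst]; ring)

theorem one_add_pow_four_mul_exp_neg_sq_le (u : ℝ) : (1 + u ^ 4) * exp (-u ^ 2) ≤ 3 := by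
  have hexp := quadratic_le_exp_of_nonneg (sq_nonneg u)
  rw [exp_neg, ← div_eq_mul_inv, div_le_iff₀ (exp_pos _)]
  nlinarith [sq_nonneg u]

theorem abs_mul_exp_neg_sq_le {p u c : ℝ} (hp : |p| ≤ c * (1 + u ^ 4)) :
    |p * exp (-u ^ 2)| ≤ 3 * c := by
  have hc : 0 ≤ c := nonneg_of_mul_nonneg_left ((abs_nonneg p).trans hp) (by positivity)
  rw [abs_mul, abs_of_pos (exp_pos _)]
  calc |p| * exp (-u ^ 2) ≤ c * ((1 + u ^ 4) * exp (-u ^ 2)) := by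
        rw [← mul_assoc]; exact mul_le_mul_of_nonneg_right hp (exp_pos _).le
    _ ≤ 3 * c := by nlinarith [one_add_pow_four_mul_exp_neg_sq_le u]

theorem one_div_sqrt_pi_le_one : 1 / √π ≤ 1 :=
  div_le_one_of_le₀ (one_le_sqrt.2 (by linarith [pi_gt_three])) (sqrt_nonneg _)

theorem abs_g_sss_le (s t : ℝ) : |g_sss s t| ≤ 12 * heatScale t ^ 3 := by
  set u := s * heatScale t
  have hpoly : |2 - 4 * u ^ 2| ≤ 4 * (1 + u ^ 4) :=
    abs_le.2 ⟨by nlinarith [sq_nonneg (u ^ 2 - 1)], by nlinarith [sq_nonneg u]⟩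
  have hw := pow_nonneg (heatScale_nonneg t) 3
  calc |g_sss s t| = 1 / √π * heatScale t ^ 3 * |(2 - 4 * u ^ 2) * exp (-u ^ 2)| := by
        rw [g_sss, mul_assoc _ (2 - 4 * u ^ 2), abs_mul, abs_of_nonneg (by positivity)]
    _ ≤ 1 * heatScale t ^ 3 * (3 * 4) := by
        gcongr
        · exact one_div_sqrt_pi_le_one
        · exact abs_mul_exp_neg_sq_le hpoly
    _ = 12 * heatScale t ^ 3 := by ring

theorem abs_g_sst_le (s t : ℝ) : |g_sst s t| ≤ 30 * heatScale t ^ 4 := by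
  set u := s * heatScale t
  have hpoly : |3 * u - 2 * u ^ 3| ≤ 5 * (1 + u ^ 4) :=
    abs_le.2 ⟨by nlinarith [sq_nonneg (u ^ 2 - 1), sq_nonneg (u + 1), sq_nonneg (u ^ 2 + u)],
      by nlinarith [sq_nonneg (u ^ 2 - 1), sq_nonneg (u - 1), sq_nonneg (u ^ 2 - u)]⟩
  calc |g_sst s t| = 2 / √π * heatScale t ^ 4 * |(3 * u - 2 * u ^ 3) * exp (-u ^ 2)| := by
        rw [g_sst, mul_assoc _ (3 * u - 2 * u ^ 3), abs_mul, abs_of_nonneg (by positivity)]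
    _ ≤ 2 * 1 * heatScale t ^ 4 * (3 * 5) := by
        rw [← mul_one_div 2]
        gcongr
        · exact one_div_sqrt_pi_le_one
        · exact abs_mul_exp_neg_sq_le hpoly
    _ = 30 * heatScale t ^ 4 := by ring

theorem abs_g_taylor_space_le (s t h : ℝ) :
    |g (s + h) t - g s t - h * g_s s t - h ^ 2 / 2 * g_ss s t| ≤ 12 * heatScale t ^ 3 * |h| ^ 3 := by
  simpa using abs_taylor_two_le_of_hasDerivAt (a := s) (b := s + h)
    (fun x _ => hasDerivAt_g x t) (fun x _ => hasDerivAt_g_s x t) (fun x _ => hasDerivAt_g_ss x t)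
    (fun x _ => abs_g_sss_le x t)

theorem abs_g_taylor_time_le {t : ℝ} (ht : t + 1 < 0) (s : ℝ) :
    |g s t - g s (t + 1) - 1 / 2 * g_ss s (t + 1)| ≤ 15 * heatScale (t + 1) ^ 4 := by
  have hI : uIcc (t + 1) t = Icc t (t + 1) := uIcc_of_ge (by linarith)
  have hneg : ∀ τ ∈ uIcc (t + 1) t, τ < 0 := fun τ hτ => by
    rw [hI] at hτ; linarith [hτ.2]
  have := abs_taylor_one_le_of_hasDerivAt (a := t + 1) (b := t) (M := 15 * heatScale (t + 1) ^ 4)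
    (fun τ hτ => hasDerivAt_g_time (hneg τ hτ) s)
    (fun τ hτ => (hasDerivAt_g_ss_time (hneg τ hτ) s).const_mul (-(1 / 2)))
    (fun τ hτ => by
      rw [hI] at hτ
      have hw := pow_le_pow_left₀ (heatScale_nonneg τ) (heatScale_le_heatScale hτ.2 ht) 4
      rw [abs_mul, abs_neg, abs_of_pos (by norm_num : (0 : ℝ) < 1 / 2)]
      linarith [abs_g_sst_le s τ])
  rw [show t - (t + 1) = -1 by ring, neg_one_sq, mul_one] at this
  convert this using 2
  ring

theorem iteratedDeriv_two_g (s t : ℝ) : iteratedDeriv 2 (g · t) s = g_ss s t := by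
  rw [iteratedDeriv_succ, iteratedDeriv_one,
    funext fun x => (hasDerivAt_g x t).deriv, (hasDerivAt_g_s s t).deriv]

theorem abs_average_sub_le {a b c M N δ : ℝ} (hδ0 : 0 ≤ δ) (hδ1 : δ ≤ 1) (ha : |a| ≤ M)
    (hb : |b| ≤ M) (hc : |c| ≤ N) : |(1 + δ) / 2 * a + (1 - δ) / 2 * b - c| ≤ M + N :=
  calc |(1 + δ) / 2 * a + (1 - δ) / 2 * b - c| ≤ (1 + δ) / 2 * |a| + (1 - δ) / 2 * |b| + |c| := by
        refine (abs_sub _ _).trans (add_le_add_left ((abs_add_le _ _).trans ?_) _)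
        rw [abs_mul, abs_mul, abs_of_nonneg (by linarith : 0 ≤ (1 + δ) / 2),
          abs_of_nonneg (by linarith : 0 ≤ (1 - δ) / 2)]
    _ ≤ (1 + δ) / 2 * M + (1 - δ) / 2 * M + N := by gcongr
    _ = M + N := by ring

/-- One-step two-point average bound: there is an absolute constant `C` such that for all
`s ∈ ℝ`, `t ≤ -2`, `δ ∈ [0,1]`,
`|(1+δ)/2·g(s+1-δ,t+1) + (1-δ)/2·g(s-1-δ,t+1) - g(s,t) + (δ²/2)g''(s,t+1)|
  ≤ C(|t+1|^{-3/2} + |t+1|^{-2})`. -/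
theorem stmt_17 :
    ∃ C > (0 : ℝ), ∀ s t δ : ℝ, t ≤ -2 → 0 ≤ δ → δ ≤ 1 →
      |(1 + δ) / 2 * g (s + 1 - δ) (t + 1) + (1 - δ) / 2 * g (s - 1 - δ) (t + 1)
          - g s t + δ ^ 2 / 2 * iteratedDeriv 2 (fun s' => g s' (t + 1)) s|
        ≤ C * (|t + 1| ^ (-(3 : ℝ) / 2) + |t + 1| ^ (-(2 : ℝ))) := by
  refine ⟨96, by norm_num, fun s t δ ht hδ0 hδ1 => ?_⟩
  have ht1 : t + 1 < 0 := by linarith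
  have hspace (h : ℝ) (hh : |h| ≤ 2) : |g (s + h) (t + 1) - g s (t + 1) - h * g_s s (t + 1)
      - h ^ 2 / 2 * g_ss s (t + 1)| ≤ 96 * heatScale (t + 1) ^ 3 := by
    refine (abs_g_taylor_space_le s (t + 1) h).trans ?_
    have := pow_le_pow_left₀ (abs_nonneg h) hh 3
    nlinarith [pow_nonneg (heatScale_nonneg (t + 1)) 3]
  have hsum := abs_average_sub_le hδ0 hδ1 (hspace (1 - δ) (abs_le.2 ⟨by linarith, by linarith⟩))
    (hspace (-1 - δ) (abs_le.2 ⟨by linarith, by linarith⟩)) (abs_g_taylor_time_le ht1 s)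
  have h3 : heatScale (t + 1) ^ 3 ≤ |t + 1| ^ (-(3 : ℝ) / 2) := mod_cast heatScale_pow_le_rpow ht1 3
  have h4 : heatScale (t + 1) ^ 4 ≤ |t + 1| ^ (-(2 : ℝ)) :=
    (heatScale_pow_le_rpow ht1 4).trans_eq (by congr 1; norm_num)
  rw [iteratedDeriv_two_g]
  refine le_trans (le_of_eq ?_) (hsum.trans ?_)
  · rw [show s + (1 - δ) = s + 1 - δ by ring, show s + (-1 - δ) = s - 1 - δ by ring]
    congr 1
    ring
  · have := rpow_nonneg (abs_nonneg (t + 1)) (-2)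
    linarith
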